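/- arXiv:2604.03170 — 2 statements merged into one kernel-verified Lean document; each statement's English description precedes it below -/
import Mathlib

section
/- Let c₀ and z be the sharp sub-Gaussian comparison parameters, and let G be a standard normal random variable. For every c with 0 < c < c₀ there exists an integrable random variable X⋆ with E[X⋆] = 0 and P(|X⋆| > t) ≤ min{1, 2·e^{-t²/2}} for all t ≥ 0 such that, taking the convex function f(x) = max(x − c·z, 0), one has E[f(X⋆)] > E[f(c·G)]. Hence no constant smaller than c₀ suffices for the convex domination of all such X by c·G. -/
open MeasureTheory ProbabilityTheory Real Set

/-- The standard normal density `φ(x) = (2π)^{-1/2} e^{-x²/2}`. -/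
noncomputable def stdNormalPDF (x : ℝ) : ℝ :=
  (Real.sqrt (2 * Real.pi))⁻¹ * Real.exp (-x ^ 2 / 2)

/-- The Gaussian tail `Φ̄(x) = ∫_x^∞ φ(t) dt`. -/
noncomputable def gaussTail (x : ℝ) : ℝ := ∫ t in Set.Ioi x, stdNormalPDF t

/-- `B = A/2`, where `A = t₀ + 2 ∫_{t₀}^∞ e^{-t²/2} dt` and `t₀ = √(2 log 2)`. -/
noncomputable def Bconst : ℝ :=
  Real.sqrt (2 * Real.log 2) / 2 +
    ∫ t in Set.Ioi (Real.sqrt (2 * Real.log 2)), Real.exp (-t ^ 2 / 2)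

/-- `H(x) = 2x e^{-x²/2} + 2 ∫_x^∞ e^{-t²/2} dt`. -/
noncomputable def Hfun (x : ℝ) : ℝ :=
  2 * x * Real.exp (-x ^ 2 / 2) + 2 * ∫ t in Set.Ioi x, Real.exp (-t ^ 2 / 2)

/-!
The extremal law is `X⋆ = ±R`, where `R` has density `2r e^{-r²/2}` on `(t₀, ∞)`, so that
`P(|X⋆| > t) = 2e^{-max(t₀,t)²/2} = min{1, 2e^{-t²/2}}` exactly; the choice of `t₀` is what makes
this a probability law. The sign is `-` when `R ≤ a` and `+` when `R > a`. Since
`∫_b^∞ 2r² e^{-r²/2} dr = H(b)` and `H(t₀) = 2B`, the condition `H(a) = B` says precisely that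
the two halves balance, i.e. `E[X⋆] = 0`. For `u = cz` the positive part of `X⋆ - u` is at least
`(R - u) 1_{R > a}`, whence `E[(X⋆ - u)₊] ≥ H(a) - u·2e^{-a²/2} = B - u Φ̄(z)`, while
`E[(cG - u)₊] = c φ(z) - u Φ̄(z)`, and `c φ(z) < B` is exactly `c < c₀`.
-/

local notation "t₀" => √(2 * log 2)

lemma integral_Ioi_of_hasDerivAt_of_integrable {f f' : ℝ → ℝ} (b : ℝ)
    (hderiv : ∀ x, HasDerivAt f (f' x) x) (hf : Integrable f) (hf' : Integrable f') :
    ∫ x in Ioi b, f' x = -f b := by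
  have hlim := tendsto_zero_of_hasDerivAt_of_integrableOn_Ioi (a := b) (fun x _ => hderiv x)
    hf'.integrableOn hf.integrableOn
  simpa using integral_Ioi_of_hasDerivAt_of_tendsto' (fun x _ => hderiv x) hf'.integrableOn hlim

lemma setIntegral_Ioc_add_setIntegral_Ioi {E : Type*} [NormedAddCommGroup E] [NormedSpace ℝ E]
    {μ : Measure ℝ} {f : ℝ → E} {p q : ℝ} (hpq : p ≤ q) (hf : IntegrableOn f (Ioi p) μ) :
    ∫ x in Ioc p q, f x ∂μ + ∫ x in Ioi q, f x ∂μ = ∫ x in Ioi p, f x ∂μ := by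
  rw [← setIntegral_union (Ioc_disjoint_Ioi le_rfl) measurableSet_Ioi
    (hf.mono_set Ioc_subset_Ioi_self) (hf.mono_set (Ioi_subset_Ioi hpq)), Ioc_union_Ioi_eq_Ioi hpq]

section GaussianIntegrals

lemma integrable_exp_neg_sq_div_two : Integrable fun x : ℝ => exp (-x ^ 2 / 2) := by
  convert integrable_exp_neg_mul_sq (b := 1 / 2) (by norm_num) using 3; ring

lemma integrable_mul_exp_neg_sq_div_two : Integrable fun x : ℝ => x * exp (-x ^ 2 / 2) := by
  convert integrable_mul_exp_neg_mul_sq (b := 1 / 2) (by norm_num) using 4; ring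

lemma integrable_sq_mul_exp_neg_sq_div_two : Integrable fun x : ℝ => x ^ 2 * exp (-x ^ 2 / 2) := by
  convert integrable_rpow_mul_exp_neg_mul_sq (b := 1 / 2) (s := 2) (by norm_num) (by norm_num)
    using 2 with x
  rw [rpow_two]; congr 2; ring

lemma hasDerivAt_exp_neg_sq_div_two (x : ℝ) :
    HasDerivAt (fun t : ℝ => exp (-t ^ 2 / 2)) (-x * exp (-x ^ 2 / 2)) x := by
  have h : HasDerivAt (fun t : ℝ => -t ^ 2 / 2) (-x) x :=
    ((hasDerivAt_pow 2 x).fun_neg.div_const 2).congr_deriv (by norm_num; ring)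
  exact h.exp.congr_deriv (by ring)

lemma integral_Ioi_mul_exp_neg_sq_div_two (b : ℝ) :
    ∫ x in Ioi b, x * exp (-x ^ 2 / 2) = exp (-b ^ 2 / 2) := by
  have hderiv (x : ℝ) : HasDerivAt (fun t => -exp (-t ^ 2 / 2)) (x * exp (-x ^ 2 / 2)) x := by
    simpa using (hasDerivAt_exp_neg_sq_div_two x).fun_neg
  simpa using integral_Ioi_of_hasDerivAt_of_integrable b hderiv
    integrable_exp_neg_sq_div_two.neg integrable_mul_exp_neg_sq_div_two

lemma integral_Ioi_sq_mul_exp_neg_sq_div_two (b : ℝ) :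
    ∫ x in Ioi b, x ^ 2 * exp (-x ^ 2 / 2) =
      b * exp (-b ^ 2 / 2) + ∫ x in Ioi b, exp (-x ^ 2 / 2) := by
  have hderiv (x : ℝ) : HasDerivAt (fun t => -(t * exp (-t ^ 2 / 2)))
      (x ^ 2 * exp (-x ^ 2 / 2) - exp (-x ^ 2 / 2)) x :=
    ((hasDerivAt_id' x).mul (hasDerivAt_exp_neg_sq_div_two x)).fun_neg.congr_deriv (by ring)
  have h := integral_Ioi_of_hasDerivAt_of_integrable b hderiv
    integrable_mul_exp_neg_sq_div_two.neg
    (integrable_sq_mul_exp_neg_sq_div_two.sub integrable_exp_neg_sq_div_two)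
  rw [integral_sub integrable_sq_mul_exp_neg_sq_div_two.integrableOn
    integrable_exp_neg_sq_div_two.integrableOn, neg_neg] at h
  linarith

end GaussianIntegrals

section Gaussian

lemma stdNormalPDF_pos (x : ℝ) : 0 < stdNormalPDF x := by
  unfold stdNormalPDF; positivity

lemma gaussianPDFReal_zero_one (x : ℝ) : gaussianPDFReal 0 1 x = stdNormalPDF x := by
  simp [gaussianPDFReal, stdNormalPDF]

lemma integrable_stdNormalPDF : Integrable stdNormalPDF :=
  integrable_exp_neg_sq_div_two.const_mul _

lemma integrable_stdNormalPDF_mul_self : Integrable fun x => stdNormalPDF x * x := by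
  simpa only [stdNormalPDF, mul_assoc, mul_comm (exp _)] using
    integrable_mul_exp_neg_sq_div_two.const_mul (√(2 * π))⁻¹

lemma integral_Ioi_stdNormalPDF_mul_self (z : ℝ) :
    ∫ x in Ioi z, stdNormalPDF x * x = stdNormalPDF z := by
  simp only [stdNormalPDF, mul_assoc, mul_comm (exp _)]
  rw [integral_const_mul, integral_Ioi_mul_exp_neg_sq_div_two]

lemma integral_max_sub_gaussianReal (z : ℝ) :
    ∫ x, max (x - z) 0 ∂gaussianReal 0 1 = stdNormalPDF z - z * gaussTail z := by
  have hpayoff : (fun x => gaussianPDFReal 0 1 x • max (x - z) 0) =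
      (Ioi z).indicator fun x => stdNormalPDF x * x - z * stdNormalPDF x := by
    ext x
    rw [gaussianPDFReal_zero_one, smul_eq_mul]
    by_cases hx : z < x
    · rw [indicator_of_mem (mem_Ioi.2 hx), max_eq_left (by linarith)]; ring
    · rw [indicator_of_notMem (by simpa using hx), max_eq_right (by linarith), mul_zero]
  rw [integral_gaussianReal_eq_integral_smul one_ne_zero, hpayoff,
    integral_indicator measurableSet_Ioi,
    integral_sub integrable_stdNormalPDF_mul_self.integrableOn
      (integrable_stdNormalPDF.const_mul z).integrableOn,
    integral_const_mul, integral_Ioi_stdNormalPDF_mul_self, gaussTail]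

end Gaussian

section RadialLaw

noncomputable def radialDensity (r : ℝ) : ℝ := 2 * r * exp (-r ^ 2 / 2)

@[fun_prop]
lemma continuous_radialDensity : Continuous radialDensity := by
  unfold radialDensity; fun_prop

lemma radialDensity_nonneg {r : ℝ} (hr : 0 ≤ r) : 0 ≤ radialDensity r := by
  unfold radialDensity; positivity

lemma integrable_radialDensity : Integrable radialDensity := by
  refine (integrable_mul_exp_neg_sq_div_two.const_mul 2).congr (ae_of_all _ fun r => ?_)
  simp only [radialDensity]; ring

lemma integrable_radialDensity_mul_self : Integrable fun r => radialDensity r * r := by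
  refine (integrable_sq_mul_exp_neg_sq_div_two.const_mul 2).congr (ae_of_all _ fun r => ?_)
  simp only [radialDensity]; ring

lemma integral_Ioi_radialDensity (b : ℝ) :
    ∫ r in Ioi b, radialDensity r = 2 * exp (-b ^ 2 / 2) := by
  simp only [radialDensity, mul_assoc]
  rw [integral_const_mul, integral_Ioi_mul_exp_neg_sq_div_two]

lemma integral_Ioi_radialDensity_mul_self (b : ℝ) :
    ∫ r in Ioi b, radialDensity r * r = Hfun b := by
  have h (r : ℝ) : radialDensity r * r = 2 * (r ^ 2 * exp (-r ^ 2 / 2)) := by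
    simp only [radialDensity]; ring
  simp only [h]
  rw [integral_const_mul, integral_Ioi_sq_mul_exp_neg_sq_div_two, Hfun]
  ring

lemma lintegral_Ioi_radialDensity {b : ℝ} (hb : 0 ≤ b) :
    ∫⁻ r in Ioi b, ENNReal.ofReal (radialDensity r) = ENNReal.ofReal (2 * exp (-b ^ 2 / 2)) := by
  rw [← integral_Ioi_radialDensity,
    ofReal_integral_eq_lintegral_ofReal integrable_radialDensity.integrableOn]
  filter_upwards [ae_restrict_mem measurableSet_Ioi] with r hr
  exact radialDensity_nonneg (hb.trans (le_of_lt hr))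

noncomputable def radialLaw (b : ℝ) : Measure ℝ :=
  (volume.restrict (Ioi b)).withDensity fun r => ENNReal.ofReal (radialDensity r)

variable {b : ℝ}

lemma radialLaw_univ (hb : 0 ≤ b) : radialLaw b univ = ENNReal.ofReal (2 * exp (-b ^ 2 / 2)) := by
  rw [radialLaw, withDensity_apply _ MeasurableSet.univ, Measure.restrict_univ,
    lintegral_Ioi_radialDensity hb]

lemma radialLaw_abs_gt (hb : 0 ≤ b) (t : ℝ) :
    radialLaw b {r | t < |r|} = ENNReal.ofReal (2 * exp (-max b t ^ 2 / 2)) := by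
  have hset : {r : ℝ | t < |r|} ∩ Ioi b = Ioi (max b t) := by
    ext r
    simp only [mem_inter_iff, mem_ofPred_eq, mem_Ioi, max_lt_iff]
    constructor
    · rintro ⟨htr, hbr⟩
      exact ⟨hbr, by rwa [abs_of_pos (hb.trans_lt hbr)] at htr⟩
    · rintro ⟨hbr, htr⟩
      exact ⟨by rwa [abs_of_pos (hb.trans_lt hbr)], hbr⟩
  have hmeas : MeasurableSet {r : ℝ | t < |r|} :=
    measurableSet_lt measurable_const continuous_abs.measurable
  rw [radialLaw, withDensity_apply _ hmeas, Measure.restrict_restrict hmeas, hset,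
    lintegral_Ioi_radialDensity (hb.trans (le_max_left b t))]

lemma measurable_ofReal_radialDensity : Measurable fun r => ENNReal.ofReal (radialDensity r) :=
  continuous_radialDensity.measurable.ennreal_ofReal

lemma integral_radialLaw (hb : 0 ≤ b) (f : ℝ → ℝ) :
    ∫ r, f r ∂radialLaw b = ∫ r in Ioi b, radialDensity r * f r := by
  rw [radialLaw, integral_withDensity_eq_integral_toReal_smul measurable_ofReal_radialDensity
    (ae_of_all _ fun _ => ENNReal.ofReal_lt_top)]
  refine setIntegral_congr_fun measurableSet_Ioi fun r hr => ?_
  rw [ENNReal.toReal_ofReal (radialDensity_nonneg (hb.trans (le_of_lt hr))), smul_eq_mul]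

lemma integrable_radialLaw_iff (hb : 0 ≤ b) {f : ℝ → ℝ} :
    Integrable f (radialLaw b) ↔ IntegrableOn (fun r => radialDensity r * f r) (Ioi b) := by
  rw [radialLaw, integrable_withDensity_iff_integrable_smul' measurable_ofReal_radialDensity
    (ae_of_all _ fun _ => ENNReal.ofReal_lt_top)]
  refine integrableOn_congr_fun (fun r hr => ?_) measurableSet_Ioi
  rw [ENNReal.toReal_ofReal (radialDensity_nonneg (hb.trans (le_of_lt hr))), smul_eq_mul]

end RadialLaw

section Threshold

lemma two_mul_exp_neg_sqrt_two_log_two_sq : 2 * exp (-t₀ ^ 2 / 2) = 1 := by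
  rw [sq_sqrt (by positivity), neg_div, mul_div_cancel_left₀ _ two_ne_zero, exp_neg,
    exp_log two_pos]
  norm_num

lemma Hfun_sqrt_two_log_two : Hfun t₀ = 2 * Bconst := by
  rw [Hfun, Bconst, mul_assoc, mul_comm t₀, ← mul_assoc, two_mul_exp_neg_sqrt_two_log_two_sq]
  ring

lemma two_mul_exp_neg_max_sq {t : ℝ} (ht : 0 ≤ t) :
    2 * exp (-max t₀ t ^ 2 / 2) = min 1 (2 * exp (-t ^ 2 / 2)) := by
  rcases le_total t t₀ with htt | htt
  · have hle : exp (-t₀ ^ 2 / 2) ≤ exp (-t ^ 2 / 2) := by gcongr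
    rw [max_eq_left htt, two_mul_exp_neg_sqrt_two_log_two_sq,
      min_eq_left (by linarith [two_mul_exp_neg_sqrt_two_log_two_sq])]
  · have hle : exp (-t ^ 2 / 2) ≤ exp (-t₀ ^ 2 / 2) := by gcongr
    rw [max_eq_right htt, min_eq_right (by linarith [two_mul_exp_neg_sqrt_two_log_two_sq])]

end Threshold

section ExtremalLaw

noncomputable def signFlip (a r : ℝ) : ℝ := if r ≤ a then -r else r

lemma abs_signFlip (a r : ℝ) : |signFlip a r| = |r| := by
  unfold signFlip; split_ifs <;> simp

lemma measurable_signFlip (a : ℝ) : Measurable (signFlip a) :=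
  Measurable.ite measurableSet_Iic measurable_neg measurable_id

noncomputable def extremalLaw (a : ℝ) : Measure ℝ := (radialLaw t₀).map (signFlip a)

variable {a : ℝ}

instance (a : ℝ) : IsProbabilityMeasure (extremalLaw a) := by
  constructor
  rw [extremalLaw, Measure.map_apply (measurable_signFlip a) MeasurableSet.univ, preimage_univ,
    radialLaw_univ (sqrt_nonneg _), two_mul_exp_neg_sqrt_two_log_two_sq, ENNReal.ofReal_one]

lemma extremalLaw_abs_gt (a t : ℝ) :
    extremalLaw a {x | t < |x|} = ENNReal.ofReal (2 * exp (-max t₀ t ^ 2 / 2)) := by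
  have hpre : signFlip a ⁻¹' {x | t < |x|} = {r | t < |r|} := by
    ext r; simp [abs_signFlip]
  rw [extremalLaw, Measure.map_apply (measurable_signFlip a)
    (measurableSet_lt measurable_const continuous_abs.measurable), hpre,
    radialLaw_abs_gt (sqrt_nonneg _)]

lemma integrable_extremalLaw_iff {h : ℝ → ℝ} (hh : AEStronglyMeasurable h (extremalLaw a)) :
    Integrable h (extremalLaw a) ↔
      IntegrableOn (fun r => radialDensity r * h (signFlip a r)) (Ioi t₀) := by
  rw [extremalLaw, integrable_map_measure hh (measurable_signFlip a).aemeasurable,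
    integrable_radialLaw_iff (sqrt_nonneg _)]
  rfl

lemma integrable_id_extremalLaw (a : ℝ) : Integrable (fun x => x) (extremalLaw a) := by
  rw [integrable_extremalLaw_iff measurable_id'.aestronglyMeasurable]
  refine Integrable.mono integrable_radialDensity_mul_self.integrableOn
    ((continuous_radialDensity.measurable.mul (measurable_signFlip a)).aestronglyMeasurable)
    (ae_of_all _ fun r => ?_)
  simp only [norm_mul, Real.norm_eq_abs, abs_signFlip, le_refl]

lemma integral_extremalLaw (ha : t₀ ≤ a) {h : ℝ → ℝ} (hh : Integrable h (extremalLaw a)) :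
    ∫ x, h x ∂extremalLaw a =
      (∫ r in Ioc t₀ a, radialDensity r * h (-r)) + ∫ r in Ioi a, radialDensity r * h r := by
  have hint := (integrable_extremalLaw_iff hh.aestronglyMeasurable).1 hh
  rw [extremalLaw, integral_map (measurable_signFlip a).aemeasurable hh.aestronglyMeasurable,
    integral_radialLaw (sqrt_nonneg _), ← setIntegral_Ioc_add_setIntegral_Ioi ha hint,
    setIntegral_congr_fun measurableSet_Ioc fun r hr => by rw [signFlip, if_pos hr.2],
    setIntegral_congr_fun measurableSet_Ioi fun r hr => by rw [signFlip, if_neg (not_le.2 hr)]]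

lemma integral_id_extremalLaw (ha : t₀ ≤ a) :
    ∫ x, x ∂extremalLaw a = 2 * Hfun a - Hfun t₀ := by
  have hsplit := setIntegral_Ioc_add_setIntegral_Ioi ha
    integrable_radialDensity_mul_self.integrableOn
  rw [integral_Ioi_radialDensity_mul_self, integral_Ioi_radialDensity_mul_self] at hsplit
  rw [integral_extremalLaw ha (integrable_id_extremalLaw a), integral_Ioi_radialDensity_mul_self]
  simp only [mul_neg, integral_neg]
  linarith

lemma sub_le_integral_max_sub_extremalLaw (ha : t₀ ≤ a) (u : ℝ) :
    Hfun a - 2 * exp (-a ^ 2 / 2) * u ≤ ∫ x, max (x - u) 0 ∂extremalLaw a := by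
  have hlin : Integrable fun r => radialDensity r * (r - u) :=
    (integrable_radialDensity_mul_self.sub (integrable_radialDensity.mul_const u)).congr
      (ae_of_all _ fun r => by simp only [Pi.sub_apply]; ring)
  have hpos : Integrable fun r => radialDensity r * max (r - u) 0 := by
    refine hlin.mono (by fun_prop) (ae_of_all _ fun r => ?_)
    rw [norm_mul, norm_mul]
    gcongr
    rw [Real.norm_eq_abs, abs_of_nonneg (le_max_right _ _)]
    exact max_le (le_abs_self _) (norm_nonneg _)
  have hneg : 0 ≤ ∫ r in Ioc t₀ a, radialDensity r * max (-r - u) 0 :=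
    setIntegral_nonneg measurableSet_Ioc fun r hr =>
      mul_nonneg (radialDensity_nonneg ((sqrt_nonneg _).trans hr.1.le)) (le_max_right _ _)
  have hIoi : ∫ r in Ioi a, radialDensity r * (r - u) ≤
      ∫ r in Ioi a, radialDensity r * max (r - u) 0 :=
    setIntegral_mono_on hlin.integrableOn hpos.integrableOn measurableSet_Ioi fun r hr =>
      mul_le_mul_of_nonneg_left (le_max_left _ _)
        (radialDensity_nonneg ((sqrt_nonneg _).trans (ha.trans (le_of_lt hr))))
  have hval : ∫ r in Ioi a, radialDensity r * (r - u) = Hfun a - 2 * exp (-a ^ 2 / 2) * u := by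
    simp only [mul_sub]
    rw [integral_sub integrable_radialDensity_mul_self.integrableOn
      (integrable_radialDensity.mul_const u).integrableOn, integral_mul_const,
      integral_Ioi_radialDensity_mul_self, integral_Ioi_radialDensity]
  have hint : Integrable (fun x => max (x - u) 0) (extremalLaw a) :=
    ((integrable_id_extremalLaw a).sub (integrable_const u)).pos_part
  rw [integral_extremalLaw ha hint]
  linarith

end ExtremalLaw

/-- Sharpness of the sub-Gaussian comparison constant: for every `0 < c < c₀` there is an
integrable mean-zero random variable `X⋆` (given here by its law `ν` on `ℝ`) with
`P(|X⋆| > t) ≤ min{1, 2e^{-t²/2}}` for all `t ≥ 0` such that, for the convex function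
`f(x) = max(x − c z, 0)`, one has `E[f(X⋆)] > E[f(c G)]` with `G` standard normal. -/
theorem stmt1
    (a z c₀ : ℝ)
    (ha : Real.sqrt (2 * Real.log 2) < a) (hHa : Hfun a = Bconst)
    (hz : gaussTail z = 2 * Real.exp (-a ^ 2 / 2))
    (hc₀ : c₀ = Bconst / stdNormalPDF z)
    (c : ℝ) (hc_pos : 0 < c) (hc_lt : c < c₀) :
    ∃ ν : Measure ℝ, IsProbabilityMeasure ν ∧
      Integrable (fun x => x) ν ∧
      (∫ x, x ∂ν) = 0 ∧
      (∀ t : ℝ, 0 ≤ t →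
        ν {x | t < |x|} ≤ ENNReal.ofReal (min 1 (2 * Real.exp (-t ^ 2 / 2)))) ∧
      (∫ x, max (c * x - c * z) 0 ∂(gaussianReal 0 1)) < ∫ x, max (x - c * z) 0 ∂ν := by
  refine ⟨extremalLaw a, inferInstance, integrable_id_extremalLaw a, ?_, fun t ht => ?_, ?_⟩
  · rw [integral_id_extremalLaw ha.le, hHa, Hfun_sqrt_two_log_two]
    ring
  · rw [extremalLaw_abs_gt, two_mul_exp_neg_max_sq ht]
  · have hcφ : c * stdNormalPDF z < Bconst := by
      rwa [hc₀, lt_div_iff₀ (stdNormalPDF_pos z)] at hc_lt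
    have hgauss : ∫ x, max (c * x - c * z) 0 ∂gaussianReal 0 1 =
        c * (stdNormalPDF z - z * gaussTail z) := by
      have hscale (x : ℝ) : max (c * x - c * z) 0 = c * max (x - z) 0 := by
        rw [mul_max_of_nonneg _ _ hc_pos.le, mul_sub, mul_zero]
      simp only [hscale]
      rw [integral_const_mul, integral_max_sub_gaussianReal]
    have hν := sub_le_integral_max_sub_extremalLaw ha.le (c * z)
    rw [hHa, ← hz] at hν
    rw [hgauss]
    linarith
end

section
/- Let s : [0, ∞) → [0, 1] be nonincreasing and continuous with A_s = ∫₀^∞ s(t) dt < ∞, B_s = A_s/2, H_s(x) = x·s(x) + ∫_x^∞ s(t) dt, a > 0 with H_s(a) = B_s, p₀ = s(a), and envelope J_s(u) = B_s − p₀·u for 0 ≤ u ≤ a, J_s(u) = ∫_u^∞ s(t) dt for u ≥ a. Let X be integrable with E[X] = 0 and P(|X| > t) ≤ s(t) for all t ≥ 0, and let Y be integrable and symmetric about 0 (Y and −Y have the same law). If g_Y(u) := E[(Y − u)₊] ≥ J_s(u) for all u ≥ 0, then X ⪯_cx Y, i.e., E[f(X)] ≤ E[f(Y)] for every convex f : ℝ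 → ℝ for which both expectations are finite. -/
/-!
For `u ≥ 0` the layer-cake formula gives `E(X - u)₊ ≤ E(|X| - u)₊ ≤ ∫_u^∞ s`, which is `J_s(u)`
beyond `a`. On `[0, a]` the transform `u ↦ E(X - u)₊` is convex, so it lies below the chord from
`E X₊ = E|X| / 2 ≤ B_s` to `E(X - a)₊ ≤ ∫_a^∞ s = B_s - a p₀`, and that chord is `J_s`. The same
applies to `-X`, and put–call parity `E(Z - u)₊ = E Z - u + E(-Z + u)₊` together with the
symmetry of `Y` turns this into `E(X - u)₊ ≤ E(Y - u)₊` for every real `u`.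

A convex `f` is the pointwise limit of the maxima of its tangent lines over finer and finer grids.
Each such maximum is an affine function plus a nonnegative combination of hinges `(x - c)₊`, so
its expectations are ordered, and dominated convergence (between the tangent at `0` and `f`)
passes to `f`.
-/

open MeasureTheory Set Filter Topology

local notation "∂₊" f:max t:max => derivWithin f (Set.Ioi t) t

noncomputable def tangentLine (f : ℝ → ℝ) (t x : ℝ) : ℝ :=
  f t + ∂₊ f t * (x - t)

/-- Where the tangent lines of `f` at `t` and `t'` meet; when their slopes agree the lines
coincide, and division by zero gives `t'`. -/
noncomputable def tangentCrossing (f : ℝ → ℝ) (t t' : ℝ) : ℝ :=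
  t' - (f t' - tangentLine f t t') / (∂₊ f t' - ∂₊ f t)

/-- The maximum of the tangent lines of `f` at the nodes `t 0, …, t m`, written as an affine
function plus a nonnegative combination of hinges `(x - c)₊`. -/
noncomputable def tangentHull (f : ℝ → ℝ) (t : ℕ → ℝ) (m : ℕ) (x : ℝ) : ℝ :=
  tangentLine f (t 0) x + ∑ k ∈ Finset.range m,
    (∂₊ f (t (k + 1)) - ∂₊ f (t k)) * max (x - tangentCrossing f (t k) (t (k + 1))) 0

lemma Monotone.exists_partitionPoint {α : Type*} [LinearOrder α] {c : ℕ → α} (hc : Monotone c)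
    (x : α) (m : ℕ) :
    ∃ j ≤ m, (∀ k < j, c k ≤ x) ∧ ∀ k, j ≤ k → k < m → x ≤ c k := by
  induction m with
  | zero => exact ⟨0, le_rfl, by simp, fun k _ hk ↦ absurd hk k.not_lt_zero⟩
  | succ m ih =>
    obtain ⟨j, hjm, hlow, hhigh⟩ := ih
    rcases hjm.lt_or_eq with hjm | rfl
    · refine ⟨j, by omega, hlow, fun k hjk hkm ↦ ?_⟩
      rcases Nat.lt_succ_iff_lt_or_eq.mp hkm with hkm | rfl
      exacts [hhigh k hjk hkm, (hhigh j le_rfl hjm).trans (hc hjk)]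
    · rcases le_or_gt (c j) x with hcx | hxc
      · refine ⟨j + 1, le_rfl, fun k hk ↦ ?_, fun k hk hk' ↦ by omega⟩
        rcases Nat.lt_succ_iff_lt_or_eq.mp hk with hkj | rfl
        exacts [hlow k hkj, hcx]
      · refine ⟨j, by omega, hlow, fun k hjk hkj ↦ ?_⟩
        obtain rfl : k = j := by omega
        exact hxc.le

namespace ConvexOn

variable {f : ℝ → ℝ} {t : ℕ → ℝ}

lemma monotone_rightDeriv (hf : ConvexOn ℝ univ f) :
    Monotone fun t ↦ ∂₊ f t := by
  simpa [interior_univ] using hf.monotoneOn_rightDeriv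

lemma tangentLine_le (hf : ConvexOn ℝ univ f) (t x : ℝ) : tangentLine f t x ≤ f x := by
  rcases lt_trichotomy x t with hxt | rfl | htx
  · have h := (hf.slope_le_leftDeriv_of_mem_interior (mem_univ x) (by simp) hxt).trans
      (hf.leftDeriv_le_rightDeriv_of_mem_interior (by simp))
    rw [slope_def_field, div_le_iff₀ (sub_pos.mpr hxt)] at h
    rw [tangentLine]
    nlinarith
  · simp [tangentLine]
  · have h := hf.rightDeriv_le_slope_of_mem_interior (by simp) (mem_univ x) htx
    rw [slope_def_field, le_div_iff₀ (sub_pos.mpr htx)] at h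
    rw [tangentLine]
    linarith

lemma tangentLine_sub_tangentLine (hf : ConvexOn ℝ univ f) (t t' x : ℝ) :
    tangentLine f t' x - tangentLine f t x =
      (∂₊ f t' - ∂₊ f t) * (x - tangentCrossing f t t') := by
  have h₁ := hf.tangentLine_le t t'
  have h₂ := hf.tangentLine_le t' t
  simp only [tangentCrossing, tangentLine] at h₁ h₂ ⊢
  generalize ∂₊ f t = d at *
  generalize ∂₊ f t' = d' at *
  rcases eq_or_ne d' d with rfl | hd
  · simp only [sub_self, div_zero, zero_mul]
    nlinarith
  · field_simp [sub_ne_zero.mpr hd]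
    ring

lemma tangentCrossing_mem_Icc (hf : ConvexOn ℝ univ f) {t t' : ℝ} (htt' : t ≤ t') :
    tangentCrossing f t t' ∈ Icc t t' := by
  have hd : 0 ≤ ∂₊ f t' - ∂₊ f t :=
    sub_nonneg.mpr (hf.monotone_rightDeriv htt')
  refine ⟨?_, sub_le_self _ (div_nonneg (sub_nonneg.mpr (hf.tangentLine_le t t')) hd)⟩
  rw [tangentCrossing, le_sub_comm]
  refine div_le_of_le_mul₀ hd (by linarith) ?_
  have := hf.tangentLine_le t' t
  simp only [tangentLine] at this ⊢
  nlinarith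

lemma sum_range_mul_sub_tangentCrossing (hf : ConvexOn ℝ univ f) (t : ℕ → ℝ) (j : ℕ) (x : ℝ) :
    ∑ k ∈ Finset.range j,
        (∂₊ f (t (k + 1)) - ∂₊ f (t k)) * (x - tangentCrossing f (t k) (t (k + 1))) =
      tangentLine f (t j) x - tangentLine f (t 0) x := by
  simp_rw [← hf.tangentLine_sub_tangentLine]
  exact Finset.sum_range_sub (fun k ↦ tangentLine f (t k) x) j

lemma rightDeriv_sub_nonneg (hf : ConvexOn ℝ univ f) (ht : Monotone t) (k : ℕ) :
    0 ≤ ∂₊ f (t (k + 1)) - ∂₊ f (t k) :=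
  sub_nonneg.mpr (hf.monotone_rightDeriv (ht k.le_succ))

lemma tangentLine_le_tangentHull (hf : ConvexOn ℝ univ f) (ht : Monotone t) {j m : ℕ}
    (hjm : j ≤ m) (x : ℝ) : tangentLine f (t j) x ≤ tangentHull f t m x := by
  rw [tangentHull, ← sub_le_iff_le_add', ← hf.sum_range_mul_sub_tangentCrossing]
  calc _ ≤ ∑ k ∈ Finset.range j,
        (∂₊ f (t (k + 1)) - ∂₊ f (t k)) * max (x - tangentCrossing f (t k) (t (k + 1))) 0 :=
        Finset.sum_le_sum fun k _ ↦ mul_le_mul_of_nonneg_left (le_max_left _ _)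
          (hf.rightDeriv_sub_nonneg ht k)
    _ ≤ _ := Finset.sum_le_sum_of_subset_of_nonneg (Finset.range_subset_range.mpr hjm)
        fun k _ _ ↦ mul_nonneg (hf.rightDeriv_sub_nonneg ht k) (le_max_right _ _)

lemma exists_tangentHull_eq_tangentLine (hf : ConvexOn ℝ univ f) (ht : Monotone t) (m : ℕ)
    (x : ℝ) : ∃ j ≤ m, tangentHull f t m x = tangentLine f (t j) x := by
  have hc : Monotone fun k ↦ tangentCrossing f (t k) (t (k + 1)) :=
    monotone_nat_of_le_succ fun k ↦ (hf.tangentCrossing_mem_Icc (ht k.le_succ)).2.trans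
      (hf.tangentCrossing_mem_Icc (ht (k + 1).le_succ)).1
  obtain ⟨j, hjm, hlow, hhigh⟩ := hc.exists_partitionPoint x m
  have hhinge_high : ∑ k ∈ Finset.Ico j m,
      (∂₊ f (t (k + 1)) - ∂₊ f (t k)) * max (x - tangentCrossing f (t k) (t (k + 1))) 0 = 0 :=
    Finset.sum_eq_zero fun k hk ↦ by
      rw [Finset.mem_Ico] at hk
      rw [max_eq_right (sub_nonpos.mpr (hhigh k hk.1 hk.2)), mul_zero]
  have hhinge_low : ∑ k ∈ Finset.range j,
      (∂₊ f (t (k + 1)) - ∂₊ f (t k)) * max (x - tangentCrossing f (t k) (t (k + 1))) 0 =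
      ∑ k ∈ Finset.range j,
      (∂₊ f (t (k + 1)) - ∂₊ f (t k)) * (x - tangentCrossing f (t k) (t (k + 1))) :=
    Finset.sum_congr rfl fun k hk ↦ by
      rw [max_eq_left (sub_nonneg.mpr (hlow k (Finset.mem_range.mp hk)))]
  refine ⟨j, hjm, ?_⟩
  rw [tangentHull, ← Finset.sum_range_add_sum_Ico _ hjm, hhinge_high, hhinge_low, add_zero,
    hf.sum_range_mul_sub_tangentCrossing, add_sub_cancel]

lemma tangentHull_le (hf : ConvexOn ℝ univ f) (ht : Monotone t) (m : ℕ) (x : ℝ) :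
    tangentHull f t m x ≤ f x := by
  obtain ⟨j, -, hj⟩ := hf.exists_tangentHull_eq_tangentLine ht m x
  exact hj ▸ hf.tangentLine_le _ x

lemma tendsto_tangentLine (hf : ConvexOn ℝ univ f) (x : ℝ) :
    Tendsto (fun t ↦ tangentLine f t x) (𝓝 x) (𝓝 (f x)) := by
  have hbdd : IsBoundedUnder (· ≤ ·) (𝓝 x) ((‖·‖) ∘ fun t ↦ ∂₊ f t) := by
    refine isBoundedUnder_of_eventually_le (a := max |∂₊ f (x - 1)| |∂₊ f (x + 1)|) ?_
    filter_upwards [Ioo_mem_nhds (sub_one_lt x) (lt_add_one x)] with t ht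
    exact abs_le_max_abs_abs (hf.monotone_rightDeriv ht.1.le) (hf.monotone_rightDeriv ht.2.le)
  have hlin : Tendsto (fun t ↦ ∂₊ f t * (x - t)) (𝓝 x) (𝓝 0) :=
    isBoundedUnder_le_mul_tendsto_zero hbdd
      (by simpa using (tendsto_const_nhds (x := x)).sub (tendsto_id (x := 𝓝 x)))
  simpa [tangentLine] using (hf.locallyLipschitz.continuous.tendsto x).add hlin

end ConvexOn

noncomputable def gridNode (n k : ℕ) : ℝ := k / (n + 1) - (n + 1)

lemma monotone_gridNode (n : ℕ) : Monotone (gridNode n) := fun k l hkl ↦ by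
  unfold gridNode; gcongr

lemma gridNode_sq (n : ℕ) : gridNode n ((n + 1) ^ 2) = 0 := by
  unfold gridNode; push_cast; field_simp; ring

lemma tendsto_gridNode_floor (x : ℝ) :
    Tendsto (fun n : ℕ ↦ gridNode n ⌊(x + (n + 1)) * (n + 1)⌋₊) atTop (𝓝 x) := by
  have hlow : ∀ n : ℕ, x - 1 / (n + 1) ≤ gridNode n ⌊(x + (n + 1)) * (n + 1)⌋₊ := fun n ↦ by
    have hfloor := Nat.lt_floor_add_one ((x + (n + 1)) * (n + 1))
    have hgap : gridNode n ⌊(x + (n + 1)) * (n + 1)⌋₊ - (x - 1 / (n + 1)) =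
        (⌊(x + (n + 1)) * (n + 1)⌋₊ + 1 - (x + (n + 1)) * (n + 1)) / (n + 1) := by
      unfold gridNode; field_simp; ring
    linarith [div_nonneg (sub_nonneg.mpr hfloor.le) (by positivity : (0 : ℝ) ≤ n + 1)]
  have hup : ∀ᶠ n : ℕ in atTop, gridNode n ⌊(x + (n + 1)) * (n + 1)⌋₊ ≤ x := by
    filter_upwards [eventually_ge_atTop ⌈-x⌉₊] with n hn
    have hx : 0 ≤ (x + (n + 1)) * (n + 1) := by
      have := (Nat.le_ceil (-x)).trans (Nat.cast_le.mpr hn : (⌈-x⌉₊ : ℝ) ≤ n)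
      nlinarith
    have hgap : x - gridNode n ⌊(x + (n + 1)) * (n + 1)⌋₊ =
        ((x + (n + 1)) * (n + 1) - ⌊(x + (n + 1)) * (n + 1)⌋₊) / (n + 1) := by
      unfold gridNode; field_simp; ring
    linarith [div_nonneg (sub_nonneg.mpr (Nat.floor_le hx)) (by positivity : (0 : ℝ) ≤ n + 1)]
  refine tendsto_of_tendsto_of_tendsto_of_le_of_le' ?_ tendsto_const_nhds
    (Eventually.of_forall hlow) hup
  simpa using (tendsto_const_nhds (x := x)).sub tendsto_one_div_add_atTop_nhds_zero_nat

lemma eventually_floor_le_two_mul_sq (x : ℝ) :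
    ∀ᶠ n : ℕ in atTop, ⌊(x + (n + 1)) * (n + 1)⌋₊ ≤ 2 * (n + 1) ^ 2 := by
  filter_upwards [eventually_ge_atTop ⌈x⌉₊] with n hn
  have hx : x ≤ n := (Nat.le_ceil x).trans (Nat.cast_le.mpr hn)
  refine Nat.floor_le_of_le ?_
  push_cast
  nlinarith

noncomputable def gridTangentHull (f : ℝ → ℝ) (n : ℕ) : ℝ → ℝ :=
  tangentHull f (gridNode n) (2 * (n + 1) ^ 2)

lemma ConvexOn.tendsto_gridTangentHull {f : ℝ → ℝ} (hf : ConvexOn ℝ univ f) (x : ℝ) :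
    Tendsto (fun n ↦ gridTangentHull f n x) atTop (𝓝 (f x)) := by
  refine tendsto_of_tendsto_of_tendsto_of_le_of_le'
    ((hf.tendsto_tangentLine x).comp (tendsto_gridNode_floor x)) tendsto_const_nhds ?_
    (Eventually.of_forall fun n ↦ hf.tangentHull_le (monotone_gridNode n) _ x)
  filter_upwards [eventually_floor_le_two_mul_sq x] with n hn
  exact hf.tangentLine_le_tangentHull (monotone_gridNode n) hn x

lemma ConvexOn.tangentLine_zero_le_gridTangentHull {f : ℝ → ℝ} (hf : ConvexOn ℝ univ f)
    (n : ℕ) (x : ℝ) : tangentLine f 0 x ≤ gridTangentHull f n x := by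
  have h := hf.tangentLine_le_tangentHull (monotone_gridNode n)
    (by nlinarith : (n + 1) ^ 2 ≤ 2 * (n + 1) ^ 2) x
  rwa [gridNode_sq] at h

lemma MeasureTheory.Integrable.posPart_sub_const {Ω : Type*} [MeasurableSpace Ω] {μ : Measure Ω}
    [IsFiniteMeasure μ] {Z : Ω → ℝ} (hZ : Integrable Z μ) (u : ℝ) :
    Integrable (fun ω ↦ max (Z ω - u) 0) μ :=
  (hZ.sub (integrable_const u)).pos_part

section ConvexOrder

variable {Ω Ω' : Type*} [MeasurableSpace Ω] [MeasurableSpace Ω'] {μ : Measure Ω} {ν : Measure Ω'}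
  [IsProbabilityMeasure μ] [IsProbabilityMeasure ν] {f : ℝ → ℝ}

lemma MeasureTheory.Integrable.tangentLine_comp {Z : Ω → ℝ} (hZ : Integrable Z μ) (f : ℝ → ℝ)
    (t : ℝ) :
    Integrable (fun ω ↦ tangentLine f t (Z ω)) μ :=
  (integrable_const _).add ((hZ.sub (integrable_const t)).const_mul _)

lemma integral_tangentLine_comp {Z : Ω → ℝ} (hZ : Integrable Z μ) (f : ℝ → ℝ) (t : ℝ) :
    ∫ ω, tangentLine f t (Z ω) ∂μ = tangentLine f t (∫ ω, Z ω ∂μ) := by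
  have hlin : Integrable (fun ω ↦ ∂₊ f t * (Z ω - t)) μ :=
    (hZ.sub (integrable_const t)).const_mul _
  simp only [tangentLine]
  rw [integral_add (integrable_const _) hlin, integral_const_mul,
    integral_sub hZ (integrable_const t)]
  simp

lemma MeasureTheory.Integrable.tangentHull_comp {Z : Ω → ℝ} (hZ : Integrable Z μ) (f : ℝ → ℝ)
    (t : ℕ → ℝ) (m : ℕ) : Integrable (fun ω ↦ tangentHull f t m (Z ω)) μ :=
  (hZ.tangentLine_comp f (t 0)).add
    (integrable_finsetSum _ fun _ _ ↦ (hZ.posPart_sub_const _).const_mul _)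

lemma integral_tangentHull_comp {Z : Ω → ℝ} (hZ : Integrable Z μ) (f : ℝ → ℝ) (t : ℕ → ℝ)
    (m : ℕ) :
    ∫ ω, tangentHull f t m (Z ω) ∂μ = tangentLine f (t 0) (∫ ω, Z ω ∂μ) +
      ∑ k ∈ Finset.range m,
        (∂₊ f (t (k + 1)) - ∂₊ f (t k)) *
          ∫ ω, max (Z ω - tangentCrossing f (t k) (t (k + 1))) 0 ∂μ := by
  simp only [tangentHull]
  rw [integral_add (hZ.tangentLine_comp f (t 0))
      (integrable_finsetSum _ fun _ _ ↦ (hZ.posPart_sub_const _).const_mul _),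
    integral_tangentLine_comp hZ,
    integral_finsetSum _ fun _ _ ↦ (hZ.posPart_sub_const _).const_mul _]
  simp_rw [integral_const_mul]

lemma ConvexOn.integral_tangentHull_comp_le (hf : ConvexOn ℝ univ f) {t : ℕ → ℝ}
    (ht : Monotone t) (m : ℕ) {X : Ω → ℝ} {Y : Ω' → ℝ} (hX : Integrable X μ)
    (hY : Integrable Y ν) (hmean : ∫ ω, X ω ∂μ = ∫ ω, Y ω ∂ν)
    (hSL : ∀ u, ∫ ω, max (X ω - u) 0 ∂μ ≤ ∫ ω, max (Y ω - u) 0 ∂ν) :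
    ∫ ω, tangentHull f t m (X ω) ∂μ ≤ ∫ ω, tangentHull f t m (Y ω) ∂ν := by
  rw [integral_tangentHull_comp hX, integral_tangentHull_comp hY, hmean]
  gcongr with k
  exacts [hf.rightDeriv_sub_nonneg ht k, hSL _]

lemma ConvexOn.tendsto_integral_gridTangentHull_comp (hf : ConvexOn ℝ univ f) {Z : Ω → ℝ}
    (hZ : Integrable Z μ) (hfZ : Integrable (fun ω ↦ f (Z ω)) μ) :
    Tendsto (fun n ↦ ∫ ω, gridTangentHull f n (Z ω) ∂μ) atTop (𝓝 (∫ ω, f (Z ω) ∂μ)) := by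
  refine tendsto_integral_of_dominated_convergence (fun ω ↦ |tangentLine f 0 (Z ω)| + |f (Z ω)|)
    (fun n ↦ (hZ.tangentHull_comp f _ _).aestronglyMeasurable)
    ((hZ.tangentLine_comp f 0).abs.add hfZ.abs) (fun n ↦ Eventually.of_forall fun ω ↦ ?_)
    (Eventually.of_forall fun ω ↦ hf.tendsto_gridTangentHull (Z ω))
  exact (abs_le_max_abs_abs (hf.tangentLine_zero_le_gridTangentHull n (Z ω))
    (hf.tangentHull_le (monotone_gridNode n) _ (Z ω))).trans
    (max_le_add_of_nonneg (abs_nonneg _) (abs_nonneg _))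

theorem ConvexOn.integral_comp_le_of_stopLoss_le (hf : ConvexOn ℝ univ f) {X : Ω → ℝ}
    {Y : Ω' → ℝ} (hX : Integrable X μ) (hY : Integrable Y ν)
    (hmean : ∫ ω, X ω ∂μ = ∫ ω, Y ω ∂ν)
    (hSL : ∀ u, ∫ ω, max (X ω - u) 0 ∂μ ≤ ∫ ω, max (Y ω - u) 0 ∂ν)
    (hfX : Integrable (fun ω ↦ f (X ω)) μ) (hfY : Integrable (fun ω ↦ f (Y ω)) ν) :
    ∫ ω, f (X ω) ∂μ ≤ ∫ ω, f (Y ω) ∂ν :=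
  le_of_tendsto_of_tendsto' (hf.tendsto_integral_gridTangentHull_comp hX hfX)
    (hf.tendsto_integral_gridTangentHull_comp hY hfY) fun n ↦
      hf.integral_tangentHull_comp_le (monotone_gridNode n) _ hX hY hmean hSL

end ConvexOrder

lemma setIntegral_Ioi_zero_comp_add (s : ℝ → ℝ) (u : ℝ) :
    ∫ t in Ioi 0, s (u + t) = ∫ t in Ioi u, s t := by
  have h := (measurePreserving_add_left volume u).setIntegral_preimage_emb
    (measurableEmbedding_addLeft u) s (Ioi u)
  rwa [show (u + ·) ⁻¹' Ioi u = Ioi 0 by ext; simp] at h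

lemma MeasureTheory.IntegrableOn.comp_add_Ioi_zero {s : ℝ → ℝ} {u : ℝ}
    (h : IntegrableOn s (Ioi u)) : IntegrableOn (fun t ↦ s (u + t)) (Ioi 0) := by
  have h' := ((measurePreserving_add_left volume u).integrableOn_comp_preimage
    (measurableEmbedding_addLeft u)).mpr h
  rwa [show (u + ·) ⁻¹' Ioi u = Ioi 0 by ext; simp] at h'

section StopLoss

variable {Ω : Type*} [MeasurableSpace Ω] {μ : Measure Ω}

lemma integral_posPart_sub_le_setIntegral_Ioi [IsFiniteMeasure μ] {W : Ω → ℝ}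
    (hW : Integrable W μ) {s : ℝ → ℝ} {u : ℝ} (hs : ∀ t, u < t → 0 ≤ s t)
    (hint : IntegrableOn s (Ioi u)) (htail : ∀ t, u < t → μ {ω | t < W ω} ≤ ENNReal.ofReal (s t)) :
    ∫ ω, max (W ω - u) 0 ∂μ ≤ ∫ t in Ioi u, s t := by
  rw [(hW.posPart_sub_const u).integral_eq_integral_meas_lt
    (Eventually.of_forall fun ω ↦ le_max_right _ _), ← setIntegral_Ioi_zero_comp_add s u]
  refine integral_mono_of_nonneg (Eventually.of_forall fun t ↦ measureReal_nonneg)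
    hint.comp_add_Ioi_zero ((ae_restrict_iff' measurableSet_Ioi).mpr
      (Eventually.of_forall fun t (ht : 0 < t) ↦ ?_))
  have hset : {ω | t < max (W ω - u) 0} = {ω | u + t < W ω} := by
    ext ω
    simp only [mem_ofPred_eq, lt_max_iff, ht.not_gt, or_false]
    constructor <;> intro h <;> linarith
  simp only [hset]
  exact ENNReal.toReal_le_of_le_ofReal (hs _ (by linarith)) (htail _ (by linarith))

lemma integral_posPart_eq_half_integral_abs {Z : Ω → ℝ} (hZ : Integrable Z μ)
    (hmean : ∫ ω, Z ω ∂μ = 0) : ∫ ω, max (Z ω) 0 ∂μ = (∫ ω, |Z ω| ∂μ) / 2 := by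
  have hpw : ∀ ω, max (Z ω) 0 = (|Z ω| + Z ω) / 2 := fun ω ↦ by
    rcases le_total (Z ω) 0 with h | h
    · rw [max_eq_right h, abs_of_nonpos h]; ring
    · rw [max_eq_left h, abs_of_nonneg h]; ring
  simp_rw [hpw]
  rw [integral_div, integral_add hZ.abs hZ, hmean, add_zero]

lemma convexOn_integral_posPart_sub [IsFiniteMeasure μ] {Z : Ω → ℝ} (hZ : Integrable Z μ) :
    ConvexOn ℝ univ fun v ↦ ∫ ω, max (Z ω - v) 0 ∂μ := by
  refine ⟨convex_univ, fun v _ w _ a b ha hb hab ↦ ?_⟩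
  simp only [smul_eq_mul]
  rw [← integral_const_mul, ← integral_const_mul, ← integral_add
    ((hZ.posPart_sub_const v).const_mul a) ((hZ.posPart_sub_const w).const_mul b)]
  refine integral_mono (hZ.posPart_sub_const _)
    (((hZ.posPart_sub_const v).const_mul a).add ((hZ.posPart_sub_const w).const_mul b))
    fun ω ↦ max_le ?_ (by positivity)
  have hsplit : Z ω - (a * v + b * w) = a * (Z ω - v) + b * (Z ω - w) := by
    linear_combination -(Z ω) * hab
  rw [hsplit]
  gcongr <;> exact le_max_left _ _

/-- The envelope `J_s` of the statement, with `p₀ = s a`. -/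
noncomputable def stopLossEnvelope (s : ℝ → ℝ) (a u : ℝ) : ℝ :=
  if u ≤ a then (∫ t in Ioi (0 : ℝ), s t) / 2 - s a * u else ∫ t in Ioi u, s t

lemma integral_posPart_sub_le_stopLossEnvelope [IsProbabilityMeasure μ] {Z : Ω → ℝ}
    (hZ : Integrable Z μ) (hmean : ∫ ω, Z ω ∂μ = 0) {s : ℝ → ℝ}
    (hs : ∀ t ∈ Ici (0 : ℝ), 0 ≤ s t) (hint : IntegrableOn s (Ioi 0))
    (htail : ∀ t : ℝ, 0 ≤ t → μ {ω | t < |Z ω|} ≤ ENNReal.ofReal (s t)) {a : ℝ} (ha : 0 < a)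
    (hHa : a * s a + ∫ t in Ioi a, s t = (∫ t in Ioi (0 : ℝ), s t) / 2) {u : ℝ} (hu : 0 ≤ u) :
    ∫ ω, max (Z ω - u) 0 ∂μ ≤ stopLossEnvelope s a u := by
  have habs : ∀ v, 0 ≤ v → ∫ ω, max (|Z ω| - v) 0 ∂μ ≤ ∫ t in Ioi v, s t := fun v hv ↦
    integral_posPart_sub_le_setIntegral_Ioi hZ.abs (fun t ht ↦ hs t (hv.trans ht.le))
      (hint.mono_set (Ioi_subset_Ioi hv)) fun t ht ↦ htail t (hv.trans ht.le)
  have hstop : ∀ v, 0 ≤ v → ∫ ω, max (Z ω - v) 0 ∂μ ≤ ∫ t in Ioi v, s t := fun v hv ↦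
    (integral_mono (hZ.posPart_sub_const v) (hZ.abs.posPart_sub_const v)
      fun ω ↦ max_le_max_right 0 (sub_le_sub_right (le_abs_self _) v)).trans (habs v hv)
  rw [stopLossEnvelope]
  split_ifs with hua
  · have hpos : ∫ ω, max (Z ω) 0 ∂μ ≤ (∫ t in Ioi (0 : ℝ), s t) / 2 := by
      rw [integral_posPart_eq_half_integral_abs hZ hmean]
      have h := habs 0 le_rfl
      simp only [sub_zero, abs_nonneg, max_eq_left] at h
      linarith
    have hconv := (convexOn_integral_posPart_sub hZ).2 (mem_univ 0) (mem_univ a)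
      (sub_nonneg.mpr ((div_le_one ha).mpr hua)) (div_nonneg hu ha.le) (sub_add_cancel 1 _)
    simp only [smul_eq_mul, mul_zero, zero_add, div_mul_cancel₀ u ha.ne', sub_zero] at hconv
    have hθ : 0 ≤ u / a := div_nonneg hu ha.le
    have hθ' : 0 ≤ 1 - u / a := sub_nonneg.mpr ((div_le_one ha).mpr hua)
    calc _ ≤ _ := hconv
      _ ≤ (1 - u / a) * ((∫ t in Ioi (0 : ℝ), s t) / 2) +
          u / a * ((∫ t in Ioi (0 : ℝ), s t) / 2 - a * s a) := by
        gcongr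
        linarith [hstop a ha.le]
      _ = _ := by field_simp; ring
  · exact hstop u hu

end StopLoss

section Symmetry

variable {Ω Ω' : Type*} [MeasurableSpace Ω] [MeasurableSpace Ω'] {μ : Measure Ω} {ν : Measure Ω'}

lemma integral_posPart_sub_eq [IsProbabilityMeasure μ] {Z : Ω → ℝ} (hZ : Integrable Z μ)
    (u : ℝ) :
    ∫ ω, max (Z ω - u) 0 ∂μ = ∫ ω, Z ω ∂μ - u + ∫ ω, max (-Z ω - -u) 0 ∂μ := by
  have hpw : ∀ ω, max (Z ω - u) 0 = (Z ω - u) + max (-Z ω - -u) 0 := fun ω ↦ by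
    rcases le_total u (Z ω) with h | h
    · rw [max_eq_left (by linarith), max_eq_right (by linarith)]; ring
    · rw [max_eq_right (by linarith), max_eq_left (by linarith)]; ring
  have hshift : Integrable (fun ω ↦ Z ω - u) μ := hZ.sub (integrable_const u)
  have hneg : Integrable (fun ω ↦ max (-Z ω - -u) 0) μ := hZ.neg.posPart_sub_const (-u)
  simp_rw [hpw]
  rw [integral_add hshift hneg, integral_sub hZ (integrable_const u)]
  simp

lemma integral_posPart_sub_le_of_nonneg [IsProbabilityMeasure μ] [IsProbabilityMeasure ν]
    {X : Ω → ℝ} {Y : Ω' → ℝ} (hX : Integrable X μ) (hY : Integrable Y ν)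
    (hmean : ∫ ω, X ω ∂μ = ∫ ω, Y ω ∂ν)
    (hpos : ∀ u, 0 ≤ u → ∫ ω, max (X ω - u) 0 ∂μ ≤ ∫ ω, max (Y ω - u) 0 ∂ν)
    (hneg : ∀ u, 0 ≤ u → ∫ ω, max (-X ω - u) 0 ∂μ ≤ ∫ ω, max (-Y ω - u) 0 ∂ν) (u : ℝ) :
    ∫ ω, max (X ω - u) 0 ∂μ ≤ ∫ ω, max (Y ω - u) 0 ∂ν := by
  rcases le_total 0 u with hu | hu
  · exact hpos u hu
  · rw [integral_posPart_sub_eq hX, integral_posPart_sub_eq hY, hmean]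
    gcongr
    exact hneg (-u) (neg_nonneg.mpr hu)

lemma integral_comp_neg_of_map_eq {Y : Ω' → ℝ} (hY : AEMeasurable Y ν)
    (hsymm : ν.map Y = ν.map (fun ω ↦ -Y ω)) {g : ℝ → ℝ} (hg : Measurable g) :
    ∫ ω, g (-Y ω) ∂ν = ∫ ω, g (Y ω) ∂ν := by
  rw [← integral_map (φ := fun ω ↦ -Y ω) hY.neg hg.aestronglyMeasurable, ← hsymm,
    integral_map hY hg.aestronglyMeasurable]

lemma integral_eq_zero_of_map_eq_map_neg {Y : Ω' → ℝ} (hY : AEMeasurable Y ν)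
    (hsymm : ν.map Y = ν.map (fun ω ↦ -Y ω)) : ∫ ω, Y ω ∂ν = 0 := by
  have h := integral_comp_neg_of_map_eq hY hsymm measurable_id
  simp only [id_eq, integral_neg] at h
  linarith

end Symmetry

theorem stmt7_general
    (s : ℝ → ℝ)
    (hs01 : ∀ t ∈ Set.Ici (0 : ℝ), s t ∈ Set.Icc (0 : ℝ) 1)
    (hint : IntegrableOn s (Set.Ioi 0))
    (a : ℝ) (ha : 0 < a)
    (hHa : a * s a + ∫ t in Set.Ioi a, s t = (∫ t in Set.Ioi (0 : ℝ), s t) / 2)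
    {Ω : Type*} [MeasurableSpace Ω] (μ : Measure Ω) [IsProbabilityMeasure μ]
    {Ω' : Type*} [MeasurableSpace Ω'] (μ' : Measure Ω') [IsProbabilityMeasure μ']
    (X : Ω → ℝ) (hXint : Integrable X μ) (hmean : ∫ ω, X ω ∂μ = 0)
    (htail : ∀ t : ℝ, 0 ≤ t → μ {ω | t < |X ω|} ≤ ENNReal.ofReal (s t))
    (Y : Ω' → ℝ) (hYint : Integrable Y μ')
    (hYsymm : Measure.map Y μ' = Measure.map (fun ω => -Y ω) μ')
    (hdom : ∀ u : ℝ, 0 ≤ u →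
      (if u ≤ a then (∫ t in Set.Ioi (0 : ℝ), s t) / 2 - s a * u
       else ∫ t in Set.Ioi u, s t) ≤ ∫ ω, max (Y ω - u) 0 ∂μ') :
    ∀ f : ℝ → ℝ, ConvexOn ℝ Set.univ f →
      Integrable (fun ω => f (X ω)) μ → Integrable (fun ω => f (Y ω)) μ' →
      ∫ ω, f (X ω) ∂μ ≤ ∫ ω, f (Y ω) ∂μ' := by
  intro f hf hfX hfY
  have hs : ∀ t ∈ Ici (0 : ℝ), 0 ≤ s t := fun t ht ↦ (hs01 t ht).1
  have hnegX_tail : ∀ t : ℝ, 0 ≤ t → μ {ω | t < |-X ω|} ≤ ENNReal.ofReal (s t) := by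
    simpa only [abs_neg] using htail
  have hsame_mean : ∫ ω, X ω ∂μ = ∫ ω, Y ω ∂μ' := by
    rw [hmean, integral_eq_zero_of_map_eq_map_neg hYint.aemeasurable hYsymm]
  refine hf.integral_comp_le_of_stopLoss_le hXint hYint hsame_mean
    (integral_posPart_sub_le_of_nonneg hXint hYint hsame_mean (fun u hu ↦ ?_) (fun u hu ↦ ?_))
    hfX hfY
  · exact (integral_posPart_sub_le_stopLossEnvelope hXint hmean hs hint htail ha hHa hu).trans
      (hdom u hu)
  · rw [integral_comp_neg_of_map_eq hYint.aemeasurable hYsymm (g := fun y ↦ max (y - u) 0)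
      (by fun_prop)]
    have hnegX_mean : ∫ ω, -X ω ∂μ = 0 := by rw [integral_neg, hmean, neg_zero]
    exact (integral_posPart_sub_le_stopLossEnvelope hXint.neg hnegX_mean hs hint hnegX_tail ha hHa
      hu).trans (hdom u hu)

/-- From envelope domination to convex domination: in the setting of the sharp stop-loss
envelope, let `X` be integrable with `E[X] = 0` and `P(|X| > t) ≤ s(t)` for `t ≥ 0`, and
let `Y` be integrable and symmetric about `0`. If `g_Y(u) = E[(Y − u)₊] ≥ J_s(u)` for all
`u ≥ 0`, then `X ⪯_cx Y`: `E[f(X)] ≤ E[f(Y)]` for every convex `f : ℝ → ℝ` for which both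
expectations are finite. -/
theorem stmt7
    (s : ℝ → ℝ)
    (hs01 : ∀ t ∈ Set.Ici (0 : ℝ), s t ∈ Set.Icc (0 : ℝ) 1)
    (hmono : AntitoneOn s (Set.Ici 0))
    (hcont : ContinuousOn s (Set.Ici 0))
    (hint : IntegrableOn s (Set.Ioi 0))
    (a : ℝ) (ha : 0 < a)
    (hHa : a * s a + ∫ t in Set.Ioi a, s t = (∫ t in Set.Ioi (0 : ℝ), s t) / 2)
    {Ω : Type*} [MeasurableSpace Ω] (μ : Measure Ω) [IsProbabilityMeasure μ]
    {Ω' : Type*} [MeasurableSpace Ω'] (μ' : Measure Ω') [IsProbabilityMeasure μ']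
    (X : Ω → ℝ) (hXint : Integrable X μ) (hmean : ∫ ω, X ω ∂μ = 0)
    (htail : ∀ t : ℝ, 0 ≤ t → μ {ω | t < |X ω|} ≤ ENNReal.ofReal (s t))
    (Y : Ω' → ℝ) (hYint : Integrable Y μ')
    (hYmeas : AEMeasurable Y μ')
    (hYsymm : Measure.map Y μ' = Measure.map (fun ω => -Y ω) μ')
    (hdom : ∀ u : ℝ, 0 ≤ u →
      (if u ≤ a then (∫ t in Set.Ioi (0 : ℝ), s t) / 2 - s a * u
       else ∫ t in Set.Ioi u, s t) ≤ ∫ ω, max (Y ω - u) 0 ∂μ') :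
    ∀ f : ℝ → ℝ, ConvexOn ℝ Set.univ f →
      Integrable (fun ω => f (X ω)) μ → Integrable (fun ω => f (Y ω)) μ' →
      ∫ ω, f (X ω) ∂μ ≤ ∫ ω, f (Y ω) ∂μ' :=
  stmt7_general s hs01 hint a ha hHa μ μ' X hXint hmean htail Y hYint hYsymm hdom
end
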